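/- Condition (C_i) holds for all i ∈ I_n if and only if condition (3.7) holds for all pairs i, j ∈ I_n with i ≠ j. -/

import Mathlib

open Filter Topology Set

noncomputable section

/-- `alphaLV a i x = Σ_j a i j * x j`. -/
def alphaLV {n : ℕ} (a : Fin n → Fin n → ℝ) (i : Fin n) (x : Fin n → ℝ) : ℝ :=
  ∑ j, a i j * x j

/-- A solution of the Lotka–Volterra system `x_i' = b_i x_i (1 - α_i x)` on `[0,∞)`
with values in the nonnegative orthant. -/
def IsLVSolution {n : ℕ} (b : Fin n → ℝ) (a : Fin n → Fin n → ℝ)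
    (x : ℝ → Fin n → ℝ) : Prop :=
  (∀ t ∈ Set.Ici (0:ℝ), ∀ i, 0 ≤ x t i) ∧
  (∀ t ∈ Set.Ici (0:ℝ), ∀ i,
    HasDerivWithinAt (fun s => x s i)
      (b i * x t i * (1 - alphaLV a i (x t))) (Set.Ici 0) t)

/-- An equilibrium of the Lotka–Volterra system in `ℝ^n_+`. -/
def IsLVEquilibrium {n : ℕ} (b : Fin n → ℝ) (a : Fin n → Fin n → ℝ)
    (y : Fin n → ℝ) : Prop :=
  (∀ i, 0 ≤ y i) ∧ ∀ i, b i * y i * (1 - alphaLV a i y) = 0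

/-- `y` is a global attractor: it is an equilibrium and every solution starting in
the open positive orthant converges to it. -/
def IsGlobalAttractor {n : ℕ} (b : Fin n → ℝ) (a : Fin n → Fin n → ℝ)
    (y : Fin n → ℝ) : Prop :=
  IsLVEquilibrium b a y ∧
  ∀ x : ℝ → Fin n → ℝ, IsLVSolution b a x → (∀ i, 0 < x 0 i) →
    ∀ i, Tendsto (fun t => x t i) atTop (nhds (y i))

open Classical in
/-- The projection `u^J`: `u` on `J`, zero off `J`. -/
def projLV {n : ℕ} (u : Fin n → ℝ) (J : Set (Fin n)) : Fin n → ℝ :=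
  fun i => if i ∈ J then u i else 0

open Classical in
/-- The vector `U` of (3.1), with the index set `I_n` replaced by `S`. -/
def Uvec {n : ℕ} (a : Fin n → Fin n → ℝ) (S : Set (Fin n)) (i : Fin n) : ℝ :=
  if ∃ j ∈ S, j ≠ i ∧ (a i i ≤ a j i ∨ a i j = 0) then (a i i)⁻¹
  else if (∀ j ∈ S, j ≠ i → a j i < a i i) ∧
      (∀ j ∈ S, ∀ k ∈ S, j ≠ i → k ≠ i → a j k ≤ a i k) then 0
  else sSup {r | ∃ j ∈ S, ∃ k ∈ S, j ≠ i ∧ k ≠ i ∧ a i j < a k j ∧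
      r = (a k j - a i j) / (a i i * a k j - a i j * a k i)}

/-- Condition `(C_k)` relative to a vector `U`: either `U^{I_n∖{k}}` is below `γ_k`,
or every point of `γ_k ∩ [0, U^{I_n∖{k}}]` is above `γ_j` for every `j ≠ k`. -/
def CondC {n : ℕ} (a : Fin n → Fin n → ℝ) (U : Fin n → ℝ) (k : Fin n) : Prop :=
  alphaLV a k (projLV U (({k} : Set (Fin n))ᶜ)) < 1 ∨
  ∀ j, j ≠ k → ∀ x : Fin n → ℝ,
    (∀ i, 0 ≤ x i ∧ x i ≤ projLV U (({k} : Set (Fin n))ᶜ) i) →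
    alphaLV a k x = 1 → 1 < alphaLV a j x

/-- Condition (3.7) for the pair `(i,j)` relative to a vector `U`. -/
def Cond37 {n : ℕ} (a : Fin n → Fin n → ℝ) (U : Fin n → ℝ) (i j : Fin n) : Prop :=
  max 0 (a i j / a j j * (1 - alphaLV a j (projLV U (({i, j} : Set (Fin n))ᶜ))))
    < 1 - alphaLV a i (projLV U (({i, j} : Set (Fin n))ᶜ))

/-- The vector `Y = (1/a₁₁, …, 1/aₙₙ)`. -/
def Yvec {n : ℕ} (a : Fin n → Fin n → ℝ) : Fin n → ℝ := fun i => (a i i)⁻¹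

/-!
Write `W = U^{I_n∖{i,j}}` and `pairGap a i j z = a_jj (1 - α_i z) - a_ij (1 - α_j z)`, so that
(3.7) for `(i,j)` says that `W` is below `γ_i` and `pairGap a i j W > 0`. Moving a point `z` with
`z_j = 0` along the `j`-th axis until it meets `γ_i` produces a point above `γ_j` exactly when
`pairGap a i j z > 0`. The case analysis in (3.1) is designed so that a point of `γ_i` whose
`j`-th coordinate exceeds `U_j` is above `γ_j`; this is the only property of `U` that is needed.

`(C)` ⇒ (3.7): if `W` were on or above `γ_i`, rescaling it onto `γ_i` and onto `γ_j` and applying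
`(C_i)` and `(C_j)` would give both `α_i W < α_j W` and `α_j W < α_i W`. Moving `W` onto `γ_i`
then lands either in the cell of `(C_i)` or beyond `U_j`, in both cases above `γ_j`.

(3.7) ⇒ `(C)`: a point of `γ_i ∩ [0, U^{I_n∖{i}}]` is the lift of a point of `[0, W]`, on which
the affine function `pairGap a i j` is smallest at a vertex `g`. Either `pairGap a i j g` equals
`pairGap a i j W`, or `g` vanishes at some `q ∉ {i, j}` where `W` does not; then (3.7) for `(i,q)`
shows that the lift of `g` lies beyond `U_j`.
-/

open Matrix

section General

variable {ι : Type*}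

lemma dotProduct_lt_dotProduct_of_nonneg [Fintype ι] {r s y : ι → ℝ} (hy : 0 ≤ y) (hy0 : y ≠ 0)
    (hrs : ∀ m, y m ≠ 0 → r m < s m) : r ⬝ᵥ y < s ⬝ᵥ y := by
  obtain ⟨m, hm⟩ := Function.ne_iff.1 hy0
  refine Finset.sum_lt_sum (fun k _ => ?_) ⟨m, Finset.mem_univ m, ?_⟩
  · by_cases hk : y k = 0
    · simp [hk]
    · exact mul_le_mul_of_nonneg_right (hrs k hk).le (hy k)
  · exact mul_lt_mul_of_pos_right (hrs m hm) ((hy m).lt_of_ne' hm)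

lemma update_eq_add_single {M : Type*} [DecidableEq ι] [AddZeroClass M] {y : ι → M} {j : ι}
    (hyj : y j = 0) (t : M) :
    Function.update y j t = y + Pi.single j t := by
  ext m
  by_cases hm : m = j
  · subst hm; simp [hyj]
  · simp [hm]

end General

section Alpha

variable {n : ℕ} {a : Fin n → Fin n → ℝ}

lemma alphaLV_eq_dotProduct (k : Fin n) (x : Fin n → ℝ) : alphaLV a k x = a k ⬝ᵥ x := rfl

lemma alphaLV_mono (hnn : ∀ i j, 0 ≤ a i j) (k : Fin n) : Monotone (alphaLV a k) :=
  fun _ _ hxy => dotProduct_le_dotProduct_of_nonneg_left hxy (hnn k)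

lemma alphaLV_smul (k : Fin n) (s : ℝ) (x : Fin n → ℝ) :
    alphaLV a k (s • x) = s * alphaLV a k x :=
  dotProduct_smul s (a k) x

lemma alphaLV_update_of_eq_zero (k : Fin n) {y : Fin n → ℝ} {j : Fin n} (hyj : y j = 0)
    (t : ℝ) : alphaLV a k (Function.update y j t) = alphaLV a k y + a k j * t := by
  simp only [alphaLV_eq_dotProduct, update_eq_add_single hyj, dotProduct_add, dotProduct_single]

lemma alphaLV_eq_update_zero_add (k j : Fin n) (x : Fin n → ℝ) :
    alphaLV a k x = alphaLV a k (Function.update x j 0) + a k j * x j := by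
  rw [← alphaLV_update_of_eq_zero k (Function.update_self j 0 x), Function.update_idem,
    Function.update_eq_self]

lemma mul_le_alphaLV (hnn : ∀ i j, 0 ≤ a i j) (k j : Fin n) {x : Fin n → ℝ} (hx : 0 ≤ x) :
    a k j * x j ≤ alphaLV a k x :=
  Finset.single_le_sum (fun m _ => mul_nonneg (hnn k m) (hx m)) (Finset.mem_univ j)

end Alpha

section Proj

variable {n : ℕ} {u : Fin n → ℝ}

@[simp]
lemma projLV_of_mem {J : Set (Fin n)} {m : Fin n} (hm : m ∈ J) : projLV u J m = u m := by
  simp [projLV, hm]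

@[simp]
lemma projLV_of_notMem {J : Set (Fin n)} {m : Fin n} (hm : m ∉ J) : projLV u J m = 0 := by
  simp [projLV, hm]

lemma projLV_nonneg (hu : 0 ≤ u) (J : Set (Fin n)) : 0 ≤ projLV u J := by
  intro m
  unfold projLV
  split_ifs
  exacts [hu m, le_rfl]

lemma projLV_mono (hu : 0 ≤ u) {J K : Set (Fin n)} (hJK : J ⊆ K) : projLV u J ≤ projLV u K := by
  intro m
  unfold projLV
  split_ifs with hJ hK
  exacts [le_rfl, absurd (hJK hJ) hK, hu m, le_rfl]

lemma projLV_projLV (J K : Set (Fin n)) : projLV (projLV u J) K = projLV u (J ∩ K) := by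
  ext m
  by_cases hJ : m ∈ J <;> by_cases hK : m ∈ K <;> simp [projLV, hJ, hK]

lemma update_projLV (J : Set (Fin n)) (j : Fin n) :
    Function.update (projLV u J) j (u j) = projLV u (insert j J) := by
  ext m
  rcases eq_or_ne m j with rfl | hm
  · simp
  · by_cases hJ : m ∈ J <;> simp [projLV, hm, hJ]

lemma dotProduct_le_dotProduct_projLV_pos {c y w : Fin n → ℝ} (hy : 0 ≤ y) (hyw : y ≤ w) :
    c ⬝ᵥ y ≤ c ⬝ᵥ projLV w {m | 0 < c m} := by
  refine Finset.sum_le_sum fun m _ => ?_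
  by_cases hc : 0 < c m
  · rw [projLV_of_mem hc]
    exact mul_le_mul_of_nonneg_left (hyw m) hc.le
  · rw [projLV_of_notMem hc, mul_zero]
    exact mul_nonpos_of_nonpos_of_nonneg (not_lt.1 hc) (hy m)

end Proj

section Threshold

variable {n : ℕ} {a : Fin n → Fin n → ℝ}

def IsLVThreshold (a : Fin n → Fin n → ℝ) (U : Fin n → ℝ) : Prop :=
  0 ≤ U ∧ ∀ i j, i ≠ j → ∀ x : Fin n → ℝ, 0 ≤ x → U j < x j →
    alphaLV a i x = 1 → 1 < alphaLV a j x

lemma one_sub_mul_lt_of_div_lt {A B p d θ : ℝ} (hB : 0 < B) (hp : 0 ≤ p) (hpd : p < d)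
    (hθ : 0 < θ) (hdθ : d * θ ≤ 1) (hratio : B < A → (A - B) / (d * A - B * p) < θ) :
    (1 - d * θ) * A < (1 - p * θ) * B := by
  rcases le_or_gt A B with hAB | hBA
  · calc (1 - d * θ) * A ≤ (1 - d * θ) * B := mul_le_mul_of_nonneg_left hAB (by linarith)
      _ < (1 - p * θ) * B := mul_lt_mul_of_pos_right (by nlinarith) hB
  · have hden : 0 < d * A - B * p := by nlinarith
    have h := hratio hBA
    rw [div_lt_iff₀ hden] at h
    linarith

lemma one_lt_alphaLV_of_inv_lt (hnn : ∀ i j, 0 ≤ a i j) (hdiag : ∀ i, 0 < a i i) {j : Fin n}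
    {x : Fin n → ℝ} (hx : 0 ≤ x) (h : (a j j)⁻¹ < x j) : 1 < alphaLV a j x :=
  calc 1 < a j j * x j := by rwa [inv_lt_iff_one_lt_mul₀' (hdiag j)] at h
    _ ≤ alphaLV a j x := mul_le_alphaLV hnn j j hx

lemma alphaLV_lt_alphaLV_of_dominant {i j : Fin n} (hcol : a i j < a j j)
    (hrow : ∀ m, m ≠ j → a i m ≤ a j m) {x : Fin n → ℝ} (hx : 0 ≤ x) (hxj : 0 < x j) :
    alphaLV a i x < alphaLV a j x := by
  refine Finset.sum_lt_sum (fun m _ => ?_) ⟨j, Finset.mem_univ j, by gcongr⟩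
  rcases eq_or_ne m j with rfl | hm
  · exact mul_le_mul_of_nonneg_right hcol.le (hx m)
  · exact mul_le_mul_of_nonneg_right (hrow m hm) (hx m)

lemma one_lt_alphaLV_of_ratio_lt (hnn : ∀ i j, 0 ≤ a i j) {i j : Fin n} (hcol : a i j < a j j)
    (hrow : ∀ m, m ≠ j → 0 < a j m) {x : Fin n → ℝ}
    (hratio : ∀ m, m ≠ j → a j m < a i m →
      (a i m - a j m) / (a j j * a i m - a j m * a i j) < x j)
    (hx : 0 ≤ x) (hxj : 0 < x j) (hαi : alphaLV a i x = 1) : 1 < alphaLV a j x := by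
  set θ := x j
  rcases lt_or_ge 1 (a j j * θ) with hbig | hdθ
  · exact hbig.trans_le (mul_le_alphaLV hnn j j hx)
  set y := Function.update x j 0
  have hyj : y j = 0 := Function.update_self j 0 x
  have hy : 0 ≤ y := le_update_iff.2 ⟨le_rfl, fun m _ => hx m⟩
  have hαiy : alphaLV a i y = 1 - a i j * θ := by
    linarith [alphaLV_eq_update_zero_add (a := a) i j x]
  have hαiy_pos : 0 < alphaLV a i y := by
    rw [hαiy]
    nlinarith
  have hcmp : (1 - a j j * θ) * alphaLV a i y < (1 - a i j * θ) * alphaLV a j y := by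
    have h := dotProduct_lt_dotProduct_of_nonneg (r := (1 - a j j * θ) • a i)
      (s := (1 - a i j * θ) • a j) hy ?_ ?_
    · simpa only [smul_dotProduct, smul_eq_mul, alphaLV_eq_dotProduct] using h
    · rintro h0
      simp [h0, alphaLV_eq_dotProduct] at hαiy_pos
    · intro m hm
      have hmj : m ≠ j := fun h => hm (h ▸ hyj)
      simp only [Pi.smul_apply, smul_eq_mul]
      exact one_sub_mul_lt_of_div_lt (hrow m hmj) (hnn i j) hcol hxj hdθ (hratio m hmj)
  rw [hαiy, mul_comm] at hcmp
  have hαjy : 1 - a j j * θ < alphaLV a j y :=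
    lt_of_mul_lt_mul_left hcmp (hαiy ▸ hαiy_pos.le)
  linarith [alphaLV_eq_update_zero_add (a := a) j j x]

lemma bddAbove_ratios (j : Fin n) : BddAbove {r : ℝ | ∃ h ∈ (Set.univ : Set (Fin n)),
    ∃ k ∈ (Set.univ : Set (Fin n)), h ≠ j ∧ k ≠ j ∧ a j h < a k h ∧
    r = (a k h - a j h) / (a j j * a k h - a j h * a k j)} := by
  refine (Set.finite_range fun p : Fin n × Fin n =>
    (a p.2 p.1 - a j p.1) / (a j j * a p.2 p.1 - a j p.1 * a p.2 j)).subset ?_ |>.bddAbove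
  rintro r ⟨h, -, k, -, -, -, -, rfl⟩
  exact ⟨(h, k), rfl⟩

lemma Uvec_nonneg (hdiag : ∀ i, 0 < a i i) (hnn : ∀ i j, 0 ≤ a i j) : 0 ≤ Uvec a Set.univ := by
  intro j
  unfold Uvec
  split_ifs with h1
  · exact inv_nonneg.2 (hdiag j).le
  · exact le_rfl
  · push Not at h1
    refine Real.sSup_nonneg ?_
    rintro r ⟨m, -, k, -, -, hkj, hlt, rfl⟩
    have hcol := (h1 k (Set.mem_univ k) hkj).1
    exact div_nonneg (by linarith) (by nlinarith [hnn j m, hnn k j])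

theorem isLVThreshold_Uvec (hdiag : ∀ i, 0 < a i i) (hnn : ∀ i j, 0 ≤ a i j) :
    IsLVThreshold a (Uvec a Set.univ) := by
  refine ⟨Uvec_nonneg hdiag hnn, fun i j hij x hx hUx hαi => ?_⟩
  have hxj : 0 < x j := (Uvec_nonneg hdiag hnn j).trans_lt hUx
  unfold Uvec at hUx
  split_ifs at hUx with h1 h2
  · exact one_lt_alphaLV_of_inv_lt hnn hdiag hx hUx
  · have := alphaLV_lt_alphaLV_of_dominant (h2.1 i (Set.mem_univ i) hij)
      (fun m hm => h2.2 i (Set.mem_univ i) m (Set.mem_univ m) hij hm) hx hxj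
    linarith
  · push Not at h1
    refine one_lt_alphaLV_of_ratio_lt hnn (h1 i (Set.mem_univ i) hij).1
      (fun m hm => (hnn j m).lt_of_ne' (h1 m (Set.mem_univ m) hm).2) (fun m hm hlt => ?_)
      hx hxj hαi
    exact (le_csSup (bddAbove_ratios j)
      ⟨m, Set.mem_univ m, i, Set.mem_univ i, hm, hij, hlt, rfl⟩).trans_lt hUx

end Threshold

section Equivalence

variable {n : ℕ} {a : Fin n → Fin n → ℝ} {U : Fin n → ℝ}

def pairGap (a : Fin n → Fin n → ℝ) (i j : Fin n) (z : Fin n → ℝ) : ℝ :=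
  a j j * (1 - alphaLV a i z) - a i j * (1 - alphaLV a j z)

lemma pairGap_eq_sub_dotProduct (i j : Fin n) (z : Fin n → ℝ) :
    pairGap a i j z = (a j j - a i j) - (a j j • a i - a i j • a j) ⬝ᵥ z := by
  simp only [pairGap, alphaLV_eq_dotProduct, sub_dotProduct, smul_dotProduct, smul_eq_mul]
  ring

lemma pairGap_eq_mul_of_add_eq_one {i j : Fin n} {y : Fin n → ℝ} {t : ℝ}
    (h : alphaLV a i y + a i j * t = 1) :
    pairGap a i j y = a i j * (alphaLV a j y + a j j * t - 1) := by
  rw [pairGap, show 1 - alphaLV a i y = a i j * t by linarith]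
  ring

lemma cond37_iff {i j : Fin n} (hjj : 0 < a j j) :
    Cond37 a U i j ↔ alphaLV a i (projLV U ({i, j} : Set (Fin n))ᶜ) < 1 ∧
      0 < pairGap a i j (projLV U ({i, j} : Set (Fin n))ᶜ) := by
  rw [Cond37, max_lt_iff, sub_pos, pairGap, sub_pos, div_mul_eq_mul_div, div_lt_iff₀ hjj,
    mul_comm _ (a j j)]

lemma CondC.alphaLV_lt (hnn : ∀ i j, 0 ≤ a i j) {k j : Fin n} (hC : CondC a U k) (hjk : j ≠ k)
    {y : Fin n → ℝ} (hy : 0 ≤ y) (hyU : y ≤ projLV U ({k} : Set (Fin n))ᶜ)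
    (hy1 : 1 ≤ alphaLV a k y) : alphaLV a k y < alphaLV a j y := by
  have hpos : 0 < alphaLV a k y := one_pos.trans_le hy1
  set s := (alphaLV a k y)⁻¹
  have hs : 0 < s := inv_pos.2 hpos
  have hsy : s • y ≤ y := fun m => by
    simpa using mul_le_of_le_one_left (hy m) (inv_le_one_of_one_le₀ hy1)
  have hαk : alphaLV a k (s • y) = 1 := by rw [alphaLV_smul, inv_mul_cancel₀ hpos.ne']
  rcases hC with hbelow | habove
  · exact absurd (hy1.trans (alphaLV_mono hnn k hyU)) hbelow.not_ge
  · have h := habove j hjk (s • y)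
      (fun m => ⟨smul_nonneg hs.le hy m, (hsy.trans hyU) m⟩) hαk
    rw [alphaLV_smul] at h
    rwa [← inv_mul_lt_iff₀ hs, inv_inv, mul_one] at h

lemma cond37_of_condC (hdiag : ∀ i, 0 < a i i) (hnn : ∀ i j, 0 ≤ a i j)
    (hU : IsLVThreshold a U) (hC : ∀ k, CondC a U k) {i j : Fin n} (hij : i ≠ j) :
    Cond37 a U i j := by
  set W := projLV U ({i, j} : Set (Fin n))ᶜ
  have hW : 0 ≤ W := projLV_nonneg hU.1 _
  have hWi : W ≤ projLV U ({i} : Set (Fin n))ᶜ := projLV_mono hU.1 (by simp)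
  have hWj : W ≤ projLV U ({j} : Set (Fin n))ᶜ := projLV_mono hU.1 (by simp)
  have hαW : alphaLV a i W < 1 := by
    by_contra! h
    have hij' := (hC i).alphaLV_lt hnn hij.symm hW hWi h
    have hji' := (hC j).alphaLV_lt hnn hij hW hWj (h.trans hij'.le)
    exact hij'.not_gt hji'
  refine (cond37_iff (hdiag j)).2 ⟨hαW, ?_⟩
  rcases (hnn i j).eq_or_lt with h0 | haij
  · rw [pairGap, ← h0, zero_mul, sub_zero]
    exact mul_pos (hdiag j) (sub_pos.2 hαW)
  set t := (1 - alphaLV a i W) / a i j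
  have hWj0 : W j = 0 := projLV_of_notMem (by simp)
  have hαi : alphaLV a i W + a i j * t = 1 := by
    rw [mul_div_cancel₀ _ haij.ne']
    ring
  have hlift : 0 ≤ Function.update W j t :=
    le_update_iff.2 ⟨(div_pos (sub_pos.2 hαW) haij).le, fun m _ => hW m⟩
  have habove : 1 < alphaLV a j (Function.update W j t) := by
    rw [← alphaLV_update_of_eq_zero i hWj0] at hαi
    rcases le_or_gt t (U j) with hle | hlt
    · refine hαi ▸ (hC i).alphaLV_lt hnn hij.symm hlift ?_ hαi.ge
      exact update_le_iff.2 ⟨by simpa [hij.symm] using hle, fun m _ => hWi m⟩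
    · exact hU.2 i j hij _ hlift (by simpa using hlt) hαi
  rw [alphaLV_update_of_eq_zero j hWj0] at habove
  rw [pairGap_eq_mul_of_add_eq_one hαi]
  exact mul_pos haij (by linarith)

lemma pairGap_pos_of_le (hdiag : ∀ i, 0 < a i i) (hnn : ∀ i j, 0 ≤ a i j)
    (hU : IsLVThreshold a U) (h37 : ∀ i j, i ≠ j → Cond37 a U i j) {i j : Fin n} (hij : i ≠ j)
    (haij : 0 < a i j) {y : Fin n → ℝ} (hy : 0 ≤ y)
    (hyW : y ≤ projLV U ({i, j} : Set (Fin n))ᶜ) : 0 < pairGap a i j y := by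
  set W := projLV U ({i, j} : Set (Fin n))ᶜ
  have hW : 0 ≤ W := projLV_nonneg hU.1 _
  obtain ⟨-, hgapW⟩ := (cond37_iff (hdiag j)).1 (h37 i j hij)
  -- `pairGap a i j = const - c ⬝ᵥ ·`, so on the cell `[0, W]` it is smallest at `g`
  set c := a j j • a i - a i j • a j
  set g := projLV W {m | 0 < c m}
  have hgy : pairGap a i j g ≤ pairGap a i j y := by
    rw [pairGap_eq_sub_dotProduct, pairGap_eq_sub_dotProduct]
    linarith [dotProduct_le_dotProduct_projLV_pos (c := c) hy hyW]
  refine lt_of_lt_of_le ?_ hgy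
  by_cases hcW : ∀ m, W m = 0 ∨ 0 ≤ c m
  · have hgW : c ⬝ᵥ g = c ⬝ᵥ W := Finset.sum_congr rfl fun m _ => by
      by_cases hc : 0 < c m
      · rw [show g m = W m from projLV_of_mem (J := {m | 0 < c m}) hc]
      · rw [show g m = 0 from projLV_of_notMem (J := {m | 0 < c m}) hc, mul_zero]
        rcases hcW m with h0 | h0
        · rw [h0, mul_zero]
        · rw [le_antisymm (not_lt.1 hc) h0, zero_mul]
    rwa [pairGap_eq_sub_dotProduct, hgW, ← pairGap_eq_sub_dotProduct]
  push Not at hcW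
  obtain ⟨q, hWq, hcq⟩ := hcW
  have hq : q ∉ ({i, j} : Set (Fin n)) :=
    fun h => hWq (projLV_of_notMem (Set.notMem_compl_iff.2 h))
  simp only [Set.mem_insert_iff, Set.mem_singleton_iff, not_or] at hq
  have hαq := ((cond37_iff (hdiag q)).1 (h37 i q (Ne.symm hq.1))).1
  have hgj : g j = 0 := by simp [g, W, projLV_projLV]
  set t := (1 - alphaLV a i g) / a i j
  have hαi : alphaLV a i g + a i j * t = 1 := by
    rw [mul_div_cancel₀ _ haij.ne']
    ring
  -- `g q = 0` because `c q < 0`, so `g` moved to `U_j` in coordinate `j` is below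
  -- `U^{I_n∖{i,q}}`, which (3.7) for `(i,q)` puts below `γ_i`
  have hUt : U j < t := by
    by_contra! hle
    have hgU : Function.update g j (U j) ≤ projLV U ({i, q} : Set (Fin n))ᶜ := by
      rw [show g = projLV U (({i, j} : Set (Fin n))ᶜ ∩ {m | 0 < c m}) from projLV_projLV _ _,
        update_projLV]
      refine projLV_mono hU.1 fun m hm => ?_
      rcases hm with rfl | ⟨hm, hcm⟩
      · simpa using ⟨hij.symm, Ne.symm hq.2⟩
      · simp only [Set.mem_compl_iff, Set.mem_insert_iff, Set.mem_singleton_iff, not_or] at hm ⊢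
        exact ⟨hm.1, fun h => (h ▸ hcq).not_gt hcm⟩
    have := alphaLV_mono hnn i hgU
    rw [alphaLV_update_of_eq_zero i hgj] at this
    nlinarith
  have hlift : 0 ≤ Function.update g j t :=
    le_update_iff.2 ⟨(hU.1 j).trans hUt.le, fun m _ => projLV_nonneg hW _ m⟩
  have habove := hU.2 i j hij _ hlift (by simpa using hUt)
    (by rwa [alphaLV_update_of_eq_zero i hgj])
  rw [alphaLV_update_of_eq_zero j hgj] at habove
  rw [pairGap_eq_mul_of_add_eq_one hαi]
  exact mul_pos haij (by linarith)

lemma condC_of_cond37 (hdiag : ∀ i, 0 < a i i) (hnn : ∀ i j, 0 ≤ a i j)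
    (hU : IsLVThreshold a U) (h37 : ∀ i j, i ≠ j → Cond37 a U i j) (i : Fin n) :
    CondC a U i := by
  refine Or.inr fun j hji x hx hαx => ?_
  set y := Function.update x j 0
  have hy : 0 ≤ y := le_update_iff.2 ⟨le_rfl, fun m _ => (hx m).1⟩
  have hyW : y ≤ projLV U ({i, j} : Set (Fin n))ᶜ := by
    refine update_le_iff.2 ⟨projLV_nonneg hU.1 _ j, fun m hmj => ?_⟩
    rcases eq_or_ne m i with rfl | hmi
    · simpa using (hx m).2
    · simpa [hmi, hmj] using (hx m).2
  have hαiy : alphaLV a i y + a i j * x j = 1 := by rw [← alphaLV_eq_update_zero_add, hαx]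
  have haij : 0 < a i j := by
    refine (hnn i j).lt_of_ne' fun h0 => ?_
    have hαW := ((cond37_iff (hdiag j)).1 (h37 i j hji.symm)).1
    linarith [alphaLV_mono hnn i hyW, h0 ▸ hαiy]
  have hgap := pairGap_pos_of_le hdiag hnn hU h37 hji.symm haij hy hyW
  rw [pairGap_eq_mul_of_add_eq_one hαiy, mul_pos_iff_of_pos_left haij] at hgap
  linarith [alphaLV_eq_update_zero_add (a := a) j j x]

end Equivalence

theorem lemma3_2_iii_general (n : ℕ) (a : Fin n → Fin n → ℝ)
    (hdiag : ∀ i, 0 < a i i) (hnn : ∀ i j, 0 ≤ a i j) :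
    (∀ i, CondC a (Uvec a Set.univ) i) ↔
      (∀ i j, i ≠ j → Cond37 a (Uvec a Set.univ) i j) :=
  have hU := isLVThreshold_Uvec hdiag hnn
  ⟨fun hC _ _ hij => cond37_of_condC hdiag hnn hU hC hij, condC_of_cond37 hdiag hnn hU⟩

/-- Lemma 3.2(iii): condition `(C_i)` holds for all `i ∈ I_n` iff (3.7) holds for
all pairs `i ≠ j`. -/
theorem lemma3_2_iii (n : ℕ) (hn : 2 ≤ n) (b : Fin n → ℝ) (a : Fin n → Fin n → ℝ)
    (hb : ∀ i, 0 < b i) (hdiag : ∀ i, 0 < a i i) (hnn : ∀ i j, 0 ≤ a i j) :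
    (∀ i, CondC a (Uvec a Set.univ) i) ↔
      (∀ i j, i ≠ j → Cond37 a (Uvec a Set.univ) i j) :=
  lemma3_2_iii_general n a hdiag hnn
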